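/- Let p ∈ (⋀²ℝ⁴)* have coordinates (e, p¹₁, p¹₂, p²₁, p²₂, r) with r ≠ 0. Then the polynomial function M₂(ℝ) → ℝ, v ↦ p(z(v)), has exactly one critical point v*, and its critical value is p(z(v*)) = e − (p¹₁p²₂ − p¹₂p²₁)/r. -/

import Mathlib

open ExteriorAlgebra

set_option synthInstance.maxHeartbeats 1000000
set_option maxHeartbeats 1000000

/-- The wedge `v₁ ∧ ⋯ ∧ vₙ` of `n` vectors, as an element of the `n`-th exterior power. -/
noncomputable def wedge {Q : Type*} [AddCommGroup Q] [Module ℝ Q] (n : ℕ) (v : Fin n → Q) :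
    ⋀[ℝ]^n Q :=
  ⟨ExteriorAlgebra.ιMulti ℝ n v, ExteriorAlgebra.ιMulti_range ℝ n ⟨v, rfl⟩⟩

/-- The element of the dual of `⋀[ℝ]^n Q` induced by an alternating `n`-form on `Q`. -/
noncomputable def extDual {Q : Type*} [AddCommGroup Q] [Module ℝ Q] (n : ℕ)
    (φ : Q [⋀^Fin n]→ₗ[ℝ] ℝ) : Module.Dual ℝ (⋀[ℝ]^n Q) :=
  (ExteriorAlgebra.liftAlternating
      (Function.update (fun i => (0 : Q [⋀^Fin i]→ₗ[ℝ] ℝ)) n φ)).comp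
    (⋀[ℝ]^n Q).subtype

/-- The basis covector `dξᵃ ∧ dξᵇ ∈ (⋀²ℝ⁴)*`, sending `w₀ ∧ w₁` to
`w₀ᵃ w₁ᵇ − w₁ᵃ w₀ᵇ`.  With the labels `(ξ⁰,ξ¹,ξ²,ξ³) = (x¹,x²,y¹,y²)`, `dd 0 1 = dx¹∧dx²`,
`dd 2 1 = dy¹∧dx²`, `dd 3 1 = dy²∧dx²`, `dd 0 2 = dx¹∧dy¹`, `dd 0 3 = dx¹∧dy²`,
`dd 2 3 = dy¹∧dy²`. -/
noncomputable def dd (a b : Fin 4) : Module.Dual ℝ (⋀[ℝ]^2 (Fin 4 → ℝ)) :=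
  extDual 2 ((Matrix.detRowAlternating : (Fin 2 → ℝ) [⋀^Fin 2]→ₗ[ℝ] ℝ).compLinearMap
    (LinearMap.pi ![(LinearMap.proj a : (Fin 4 → ℝ) →ₗ[ℝ] ℝ), LinearMap.proj b]))

/-- The vectors `u₁ = ∂x¹ + v¹₁∂y¹ + v²₁∂y²`, `u₂ = ∂x² + v¹₂∂y¹ + v²₂∂y²` associated with a
`2×2` matrix `v` (where `v i μ = v^(i+1)_(μ+1)`). -/
noncomputable def ucol (v : Fin 2 → Fin 2 → ℝ) (μ : Fin 2) : Fin 4 → ℝ :=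
  (Pi.single (Fin.castLE (by norm_num) μ) 1 : Fin 4 → ℝ) + v 0 μ • (Pi.single 2 1 : Fin 4 → ℝ) + v 1 μ • (Pi.single 3 1 : Fin 4 → ℝ)

/-- The Plücker chart `z(v) = u₁ ∧ u₂ ∈ ⋀²ℝ⁴`. -/
noncomputable def zmap (v : Fin 2 → Fin 2 → ℝ) : ⋀[ℝ]^2 (Fin 4 → ℝ) :=
  wedge 2 (ucol v)

/-- The element of `(⋀²ℝ⁴)*` with coordinates `(e, p¹₁, p¹₂, p²₁, p²₂, r)`, namely
`e dx¹∧dx² + p¹₁ dy¹∧dx² + p¹₂ dy²∧dx² + p²₁ dx¹∧dy¹ + p²₂ dx¹∧dy² + r dy¹∧dy²`. -/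
noncomputable def pform (e p11 p12 p21 p22 r : ℝ) : Module.Dual ℝ (⋀[ℝ]^2 (Fin 4 → ℝ)) :=
  e • dd 0 1 + p11 • dd 2 1 + p12 • dd 3 1 + p21 • dd 0 2 + p22 • dd 0 3 + r • dd 2 3

/-! In the chart `v ↦ z(v)`, `p(z(v)) = e + p¹₁v¹₁ + p¹₂v²₁ + p²₁v¹₂ + p²₂v²₂ + r det v` is a
quadratic polynomial whose quadratic part `r det` is nondegenerate. Completing the square gives
`p(z(v)) = e − (p¹₁p²₂ − p¹₂p²₁)/r + r det (v − v*)`, and the `2 × 2` determinant has the zero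
matrix as its only critical point. -/

theorem extDual_wedge {Q : Type*} [AddCommGroup Q] [Module ℝ Q] (n : ℕ)
    (φ : Q [⋀^Fin n]→ₗ[ℝ] ℝ) (v : Fin n → Q) : extDual n φ (wedge n v) = φ v := by
  simp only [extDual, wedge, LinearMap.coe_comp, Function.comp_apply, Submodule.subtype_apply,
    liftAlternating_apply_ιMulti, Function.update_self]

theorem dd_wedge (a b : Fin 4) (u : Fin 2 → Fin 4 → ℝ) :
    dd a b (wedge 2 u) = u 0 a * u 1 b - u 1 a * u 0 b := by
  simp only [dd, extDual_wedge, AlternatingMap.compLinearMap_apply]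
  change Matrix.det (Matrix.of fun i => _) = _
  simp only [AddHom.toFun_eq_coe, LinearMap.coe_toAddHom, Matrix.det_fin_two, Matrix.of_apply,
    Matrix.cons_val_zero, Matrix.cons_val_one, LinearMap.coe_proj, Function.eval, sub_right_inj]
  ring

theorem pform_zmap (e p11 p12 p21 p22 r : ℝ) (v : Fin 2 → Fin 2 → ℝ) :
    pform e p11 p12 p21 p22 r (zmap v) =
      e + p11 * v 0 0 + p12 * v 1 0 + p21 * v 0 1 + p22 * v 1 1 + r * (Matrix.of v).det := by
  simp [pform, zmap, dd_wedge, ucol, Matrix.det_fin_two]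

theorem pform_zmap_eq_add_det_sub (e p11 p12 p21 p22 : ℝ) {r : ℝ} (hr : r ≠ 0)
    (v : Fin 2 → Fin 2 → ℝ) :
    pform e p11 p12 p21 p22 r (zmap v) = e - (p11 * p22 - p12 * p21) / r +
      r * (Matrix.of (v - ![![-p22 / r, p12 / r], ![p21 / r, -p11 / r]])).det := by
  simp only [pform_zmap, Matrix.det_fin_two, Matrix.of_apply, Pi.sub_apply, Matrix.cons_val_zero,
    Matrix.cons_val_one, Matrix.cons_val_fin_one]
  field_simp
  ring

noncomputable def entryCLM {m n : Type*} (i : m) (j : n) : (m → n → ℝ) →L[ℝ] ℝ :=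
  (ContinuousLinearMap.proj (R := ℝ) (φ := fun _ : n => ℝ) j).comp
    (ContinuousLinearMap.proj (R := ℝ) (φ := fun _ : m => n → ℝ) i)

@[simp]
theorem entryCLM_apply {m n : Type*} (i : m) (j : n) (w : m → n → ℝ) :
    entryCLM i j w = w i j :=
  rfl

theorem hasFDerivAt_det_fin_two (w : Fin 2 → Fin 2 → ℝ) :
    HasFDerivAt (fun v : Fin 2 → Fin 2 → ℝ => (Matrix.of v).det)
      (w 1 1 • entryCLM 0 0 + w 0 0 • entryCLM 1 1 - w 1 0 • entryCLM 0 1 -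
        w 0 1 • entryCLM 1 0) w := by
  simp only [Matrix.det_fin_two, Matrix.of_apply]
  have hentry (i j : Fin 2) := (entryCLM i j).hasFDerivAt (x := w)
  refine (((hentry 0 0).mul (hentry 1 1)).sub ((hentry 0 1).mul (hentry 1 0))).congr_fderiv ?_
  ext h
  simp only [entryCLM_apply, sub_apply, add_apply,
    smul_apply, smul_eq_mul]
  ring

theorem fderiv_det_fin_two_eq_zero_iff (w : Fin 2 → Fin 2 → ℝ) :
    fderiv ℝ (fun v : Fin 2 → Fin 2 → ℝ => (Matrix.of v).det) w = 0 ↔ w = 0 := by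
  rw [(hasFDerivAt_det_fin_two w).fderiv]
  refine ⟨fun h => ?_, fun h => by simp [h]⟩
  have hbasis (i j : Fin 2) := congrArg (fun L => L (Pi.single i (Pi.single j 1))) h
  simp [Pi.single_apply] at hbasis
  ext i j
  fin_cases i <;> fin_cases j <;> simp [hbasis]

theorem fderiv_const_add_mul_det_sub_eq_zero_iff (c : ℝ) {r : ℝ} (hr : r ≠ 0)
    (a v : Fin 2 → Fin 2 → ℝ) :
    fderiv ℝ (fun v : Fin 2 → Fin 2 → ℝ => c + r * (Matrix.of (v - a)).det) v = 0 ↔ v = a := by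
  have hdet : DifferentiableAt ℝ (fun v : Fin 2 → Fin 2 → ℝ => (Matrix.of (v - a)).det) v :=
    (differentiableAt_comp_sub a).2 (hasFDerivAt_det_fin_two (v - a)).differentiableAt
  rw [fderiv_const_add, fderiv_const_mul hdet, smul_eq_zero_iff_right hr,
    fderiv_comp_sub (f := fun w : Fin 2 → Fin 2 → ℝ => (Matrix.of w).det),
    fderiv_det_fin_two_eq_zero_iff, sub_eq_zero]

/-- Example 4 of the paper, trivial Lagrangian `l = 0`: for `r ≠ 0` the map
`v ↦ p(z(v))` has exactly one critical point, with critical value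
`e − (p¹₁p²₂ − p¹₂p²₁)/r`. -/
theorem statement15 (e p11 p12 p21 p22 r : ℝ) (hr : r ≠ 0) :
    (∃! v : Fin 2 → Fin 2 → ℝ,
        fderiv ℝ (fun v : Fin 2 → Fin 2 → ℝ => pform e p11 p12 p21 p22 r (zmap v)) v = 0) ∧
      ∀ v : Fin 2 → Fin 2 → ℝ,
        fderiv ℝ (fun v : Fin 2 → Fin 2 → ℝ => pform e p11 p12 p21 p22 r (zmap v)) v = 0 →
          pform e p11 p12 p21 p22 r (zmap v) = e - (p11 * p22 - p12 * p21) / r := by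
  simp only [pform_zmap_eq_add_det_sub e p11 p12 p21 p22 hr,
    fderiv_const_add_mul_det_sub_eq_zero_iff _ hr, existsUnique_eq, forall_eq, true_and, sub_self,
    Matrix.of_zero, Matrix.det_zero, mul_zero, add_zero]
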